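/- arXiv:2501.12126 — 2 statements merged into one kernel-verified Lean document; each statement's English description precedes it below -/
import Mathlib

section
/- Let (V, l_≻, r_≻, l_≺, r_≺) be a representation of an anti-dendriform algebra (A,≻,≺). Then (V, l_≻ + l_≺, r_≻ + r_≺) is a representation of the associated associative algebra (A,·). -/
def IsLin (k : Type*) [Field k] {V W : Type*} [AddCommGroup V] [Module k V]
    [AddCommGroup W] [Module k W] (f : V → W) : Prop :=
  ∀ (c : k) (u v : V), f (c • u + v) = c • f u + f v

def IsBilin (k : Type*) [Field k] {U V W : Type*} [AddCommGroup U] [Module k U]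
    [AddCommGroup V] [Module k V] [AddCommGroup W] [Module k W]
    (f : U → V → W) : Prop :=
  (∀ x, IsLin k (f x)) ∧ (∀ y, IsLin k (fun x => f x y))

/-- An anti-dendriform algebra structure given by two bilinear operations `s` (≻) and `p` (≺). -/
def IsADAlg (k : Type*) [Field k] {A : Type*} [AddCommGroup A] [Module k A]
    (s p : A → A → A) : Prop :=
  IsBilin k s ∧ IsBilin k p ∧
  (∀ x y z, s x (s y z) = - s (s x y + p x y) z) ∧
  (∀ x y z, s x (s y z) = - p x (s y z + p y z)) ∧
  (∀ x y z, s x (s y z) = p (p x y) z) ∧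
  (∀ x y z, p (s x y) z = s x (p y z))

/-- A representation of an anti-dendriform algebra `(A, s, p)` on `V`. -/
def IsADRep (k : Type*) [Field k] {A V : Type*} [AddCommGroup A] [Module k A]
    [AddCommGroup V] [Module k V]
    (s p : A → A → A) (ls rs lp rp : A → V → V) : Prop :=
  IsBilin k ls ∧ IsBilin k rs ∧ IsBilin k lp ∧ IsBilin k rp ∧
  (∀ x y v, ls x (ls y v) = - ls (s x y + p x y) v) ∧
  (∀ x y v, ls x (ls y v) = - lp x (ls y v + lp y v)) ∧
  (∀ x y v, ls x (ls y v) = lp (p x y) v) ∧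
  (∀ x y v, rs (s x y) v = - rs y (rs x v + rp x v)) ∧
  (∀ x y v, rs (s x y) v = - rp (s x y + p x y) v) ∧
  (∀ x y v, rs (s x y) v = rp y (rp x v)) ∧
  (∀ x y v, ls x (rs y v) = - rs y (ls x v + lp x v)) ∧
  (∀ x y v, ls x (rs y v) = - lp x (rs y v + rp y v)) ∧
  (∀ x y v, ls x (rs y v) = rp y (lp x v)) ∧
  (∀ x y v, lp (s x y) v = ls x (lp y v)) ∧
  (∀ x y v, rp y (rs x v) = rs (p x y) v) ∧
  (∀ x y v, rp y (ls x v) = ls x (rp y v))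

/-- A representation (bimodule) of an associative algebra `(A, m)` on `V`. -/
def IsAssocRep (k : Type*) [Field k] {A V : Type*} [AddCommGroup A] [Module k A]
    [AddCommGroup V] [Module k V]
    (m : A → A → A) (l r : A → V → V) : Prop :=
  IsBilin k l ∧ IsBilin k r ∧
  (∀ x y v, l (m x y) v = l x (l y v)) ∧
  (∀ x y v, r (m x y) v = r y (r x v)) ∧
  (∀ x y v, r y (l x v) = l x (r y v))

/-
Expand each side of the three bimodule identities for `l = l_≻ + l_≺`, `r = r_≻ + r_≺` by
additivity. The three-term relations of the representation cancel the pure `l_≻ l_≻`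
(resp. `r_≻ r_≻`, `l_≻ r_≻`) terms, and both sides collapse to the same mixed term
`l_≻(x) l_≺(y) v` (resp. `r_≺(y) r_≻(x) v`, `r_≺(y) l_≻(x) v`).
-/

section Linear

variable {k V W : Type*} [Field k] [AddCommGroup V] [Module k V] [AddCommGroup W] [Module k W]

theorem IsLin.add {f g : V → W} (hf : IsLin k f) (hg : IsLin k g) :
    IsLin k (fun v => f v + g v) := by
  intro c u v
  simp only [hf c u v, hg c u v, smul_add]
  abel

theorem IsLin.map_add {f : V → W} (hf : IsLin k f) (u v : V) : f (u + v) = f u + f v := by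
  simpa using hf 1 u v

theorem IsBilin.add {U : Type*} [AddCommGroup U] [Module k U] {f g : U → V → W}
    (hf : IsBilin k f) (hg : IsBilin k g) : IsBilin k (fun x v => f x v + g x v) :=
  ⟨fun x => (hf.1 x).add (hg.1 x), fun v => (hf.2 v).add (hg.2 v)⟩

end Linear

namespace IsADRep

variable {k A V : Type*} [Field k] [AddCommGroup A] [Module k A] [AddCommGroup V] [Module k V]
  {s p : A → A → A} {ls rs lp rp : A → V → V}

theorem left_add_mul (h : IsADRep k s p ls rs lp rp) (x y : A) (v : V) :
    ls (s x y + p x y) v + lp (s x y + p x y) v =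
      ls x (ls y v + lp y v) + lp x (ls y v + lp y v) := by
  obtain ⟨hls, -, hlp, -, hll, hlpl, hlpp, -, -, -, -, -, -, hlps, -, -⟩ := h
  have hl : ls (s x y + p x y) v = -ls x (ls y v) := by rw [hll, neg_neg]
  have hl' : lp x (ls y v + lp y v) = -ls x (ls y v) := by rw [hlpl, neg_neg]
  rw [(hlp.2 v).map_add, (hls.1 x).map_add, hl, hl', hlps, ← hlpp]
  abel

theorem right_add_mul (h : IsADRep k s p ls rs lp rp) (x y : A) (v : V) :
    rs (s x y + p x y) v + rp (s x y + p x y) v =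
      rs y (rs x v + rp x v) + rp y (rs x v + rp x v) := by
  obtain ⟨-, hrs, -, hrp, -, -, -, hrr, hrpr, hrpp, -, -, -, -, hrps, -⟩ := h
  have hr : rp (s x y + p x y) v = -rs (s x y) v := by rw [hrpr, neg_neg]
  have hr' : rs y (rs x v + rp x v) = -rs (s x y) v := by rw [hrr, neg_neg]
  rw [(hrs.2 v).map_add, (hrp.1 y).map_add, hr, hr', ← hrps, ← hrpp]
  abel

theorem right_add_left_add_comm (h : IsADRep k s p ls rs lp rp) (x y : A) (v : V) :
    rs y (ls x v + lp x v) + rp y (ls x v + lp x v) =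
      ls x (rs y v + rp y v) + lp x (rs y v + rp y v) := by
  obtain ⟨hls, -, -, hrp, -, -, -, -, -, -, hlr, hlpr, hlrp, -, -, hrpl⟩ := h
  have hr : rs y (ls x v + lp x v) = -ls x (rs y v) := by rw [hlr, neg_neg]
  have hl : lp x (rs y v + rp y v) = -ls x (rs y v) := by rw [hlpr, neg_neg]
  rw [(hrp.1 y).map_add, (hls.1 x).map_add, hr, hl, hrpl, ← hlrp]
  abel

end IsADRep

theorem stmt2_general {k A V : Type*} [Field k] [AddCommGroup A] [Module k A]
    [AddCommGroup V] [Module k V]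
    (s p : A → A → A) (ls rs lp rp : A → V → V)
    (h : IsADRep k s p ls rs lp rp) :
    IsAssocRep k (fun x y => s x y + p x y)
      (fun x v => ls x v + lp x v) (fun x v => rs x v + rp x v) :=
  ⟨h.1.add h.2.2.1, h.2.1.add h.2.2.2.1, h.left_add_mul, h.right_add_mul,
    h.right_add_left_add_comm⟩

theorem stmt2 {k A V : Type*} [Field k] [AddCommGroup A] [Module k A]
    [AddCommGroup V] [Module k V]
    (s p : A → A → A) (ls rs lp rp : A → V → V)
    (hA : IsADAlg k s p) (h : IsADRep k s p ls rs lp rp) :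
    IsAssocRep k (fun x y => s x y + p x y)
      (fun x v => ls x v + lp x v) (fun x v => rs x v + rp x v) :=
  stmt2_general s p ls rs lp rp h
end

section
/- Let 0 → B →^i E →^p A → 0 be a non-abelian extension of anti-dendriform algebras with section s, inducing non-abelian 2-cocycle (l_≻, r_≻, l_≺, r_≺, ω₁, ω₂). A pair (α,β) ∈ Aut(A) × Aut(B) is inducible (i.e., there exists γ ∈ Aut(E) with γ(B) = B, γi = iβ, pγ = αp) if and only if there exists a linear map φ: A → B satisfying: β(l_≻(x)a) - l_≻(α(x))β(a) = φ(x)≻_B β(a); β(r_≻(x)a) - r_≻(α(x))β(a) = β(a)≻_B φ(x); β(l_≺(x)a) - l_≺(α(x))β(a) = φ(x)≺_B β(a); β(r_≺(x)a) - r_≺(α(x))β(a) = β(a)≺_B φ(x); βω₁(x,y) - ω₁(α(x),α(y)) = φ(x)≻_B φ(y) - φ(x≻_A y) + l_≻(α(x))φ(y) + r_≻(α(y))φ(x); βω₂(x,y) - ω₂(α(x),α(y)) = φ(x)≺_B φ(y) - φ(x≺_A y) + l_≺(α(x))φ(y) + r_≺(α(y))φ(x), for all x,y ∈ A and a ∈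 B. -/
namespace IsLin

variable {k : Type*} [Field k] {U V W : Type*} [AddCommGroup U] [Module k U]
  [AddCommGroup V] [Module k V] [AddCommGroup W] [Module k W] {f : V → W}

theorem map_add_s14 (hf : IsLin k f) (u v : V) : f (u + v) = f u + f v := by
  simpa using hf 1 u v

theorem map_zero (hf : IsLin k f) : f 0 = 0 := by
  simpa using hf.map_add_s14 0 0

theorem map_smul (hf : IsLin k f) (c : k) (u : V) : f (c • u) = c • f u := by
  simpa [hf.map_zero] using hf c u 0

theorem map_sub (hf : IsLin k f) (u v : V) : f (u - v) = f u - f v := by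
  simpa [sub_eq_neg_add] using hf (-1) v u

theorem comp {g : W → U} (hg : IsLin k g) (hf : IsLin k f) : IsLin k (fun v => g (f v)) := by
  intro c u v
  simp only [hf c u v, hg c (f u) (f v)]

theorem of_injective_comp {g : W → U} (hg : IsLin k g) (hginj : Function.Injective g)
    (h : IsLin k (fun v => g (f v))) : IsLin k f :=
  fun c u v => hginj ((h c u v).trans (hg c (f u) (f v)).symm)

end IsLin

namespace IsBilin

variable {k : Type*} [Field k] {U V W : Type*} [AddCommGroup U] [Module k U]
  [AddCommGroup V] [Module k V] [AddCommGroup W] [Module k W] {m : U → V → W}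

theorem map_add_left (hm : IsBilin k m) (u u' : U) (v : V) : m (u + u') v = m u v + m u' v :=
  (hm.2 v).map_add_s14 u u'

theorem map_add_right (hm : IsBilin k m) (u : U) (v v' : V) : m u (v + v') = m u v + m u v' :=
  (hm.1 u).map_add_s14 v v'

theorem map_zero_left (hm : IsBilin k m) (v : V) : m 0 v = 0 :=
  (hm.2 v).map_zero

theorem map_zero_right (hm : IsBilin k m) (u : U) : m u 0 = 0 :=
  (hm.1 u).map_zero

end IsBilin

section CocycleConditions

variable {k A B : Type*} [Field k] [AddCommGroup B] [Module k B]
  {mA : A → A → A} {mB : B → B → B} {l r : A → B → B} {w : A → A → B}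
  {α : A → A} {β : B → B} {φ : A → B}

theorem cocycle_conditions_iff (hmB : IsBilin k mB) (hl : ∀ x, IsLin k (l x))
    (hr : ∀ x, IsLin k (r x)) (hβ : IsLin k β) (hβm : ∀ a b, β (mB a b) = mB (β a) (β b)) :
    (∀ a x b y, β (mB a b + r y a + l x b + w x y) + φ (mA x y)
        = mB (β a + φ x) (β b + φ y) + r (α y) (β a + φ x) + l (α x) (β b + φ y)
          + w (α x) (α y)) ↔
      (∀ x a, β (l x a) - l (α x) (β a) = mB (φ x) (β a)) ∧
      (∀ x a, β (r x a) - r (α x) (β a) = mB (β a) (φ x)) ∧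
      (∀ x y, β (w x y) - w (α x) (α y)
        = mB (φ x) (φ y) - φ (mA x y) + l (α x) (φ y) + r (α y) (φ x)) := by
  have expand : ∀ a x b y, β (mB a b + r y a + l x b + w x y)
      = mB (β a) (β b) + β (r y a) + β (l x b) + β (w x y) := by
    intro a x b y
    simp only [hβ.map_add_s14, hβm]
  simp only [expand, hmB.map_add_left, hmB.map_add_right, (hl _).map_add_s14, (hr _).map_add_s14]
  constructor
  · intro h
    have hw : ∀ x y, β (w x y) - w (α x) (α y)
        = mB (φ x) (φ y) - φ (mA x y) + l (α x) (φ y) + r (α y) (φ x) := fun x y => by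
      have h00 := h 0 x 0 y
      simp only [hβ.map_zero, hmB.map_zero_left, hmB.map_zero_right, (hl _).map_zero,
        (hr _).map_zero, zero_add, add_zero] at h00
      linear_combination (norm := abel) h00
    refine ⟨fun x a => ?_, fun y a => ?_, hw⟩
    · have h0 := h 0 x a x
      simp only [hβ.map_zero, hmB.map_zero_left, (hr _).map_zero, zero_add, add_zero] at h0
      linear_combination (norm := abel) h0 - hw x x
    · have h0 := h a y 0 y
      simp only [hβ.map_zero, hmB.map_zero_right, (hl _).map_zero, zero_add, add_zero] at h0
      linear_combination (norm := abel) h0 - hw y y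
  · rintro ⟨hl_cond, hr_cond, hw_cond⟩ a x b y
    linear_combination (norm := abel) hl_cond x b + hr_cond y a + hw_cond x y

end CocycleConditions

theorem pr_add_section {k A B E : Type*} [Field k] [AddCommGroup A] [Module k A]
    [AddCommGroup E] [Module k E] {i : B → E} {pr : E → A} {st : A → E} (hpr : IsLin k pr)
    (hexact : ∀ e, pr e = 0 ↔ ∃ b, i b = e) (hsec : ∀ x, pr (st x) = x) (c : B) (z : A) :
    pr (i c + st z) = z := by
  rw [hpr.map_add_s14, (hexact (i c)).2 ⟨c, rfl⟩, hsec, zero_add]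

section SplitExtension

variable {k A B E : Type*} [Field k] [AddCommGroup A] [Module k A]
  [AddCommGroup B] [Module k B] [AddCommGroup E] [Module k E]
  {i : B → E} {pr : E → A} {st : A → E}

theorem exists_retraction (hi : IsLin k i) (hiinj : Function.Injective i) (hpr : IsLin k pr)
    (hst : IsLin k st) (hsec : ∀ x, pr (st x) = x) (hexact : ∀ e, pr e = 0 ↔ ∃ b, i b = e) :
    ∃ q : E → B, IsLin k q ∧ (∀ c z, q (i c + st z) = c) ∧ ∀ e, i (q e) + st (pr e) = e := by
  choose q hq using fun e => (hexact (e - st (pr e))).1 (by rw [hpr.map_sub, hsec, sub_self])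
  refine ⟨q, ?_, fun c z => hiinj ?_, fun e => by rw [hq, sub_add_cancel]⟩
  · refine IsLin.of_injective_comp hi hiinj fun c u v => ?_
    simp only [hq, hpr c u v, hst c (pr u) (pr v)]
    module
  · rw [hq, pr_add_section hpr hexact hsec, add_sub_cancel_right]

variable {α : A → A} {β : B → B} {γ : E → E} {φ : A → B} {q : E → B}

theorem exists_split_form_of_compat (hi : IsLin k i) (hst : IsLin k st)
    (hsec : ∀ x, pr (st x) = x) (hq : IsLin k q) (hsplit : ∀ e, i (q e) + st (pr e) = e)
    (hγ : IsLin k γ) (hγi : ∀ a, γ (i a) = i (β a)) (hγpr : ∀ e, pr (γ e) = α (pr e)) :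
    ∃ φ : A → B, IsLin k φ ∧ ∀ c z, γ (i c + st z) = i (β c + φ z) + st (α z) := by
  refine ⟨fun x => q (γ (st x)), hq.comp (hγ.comp hst), fun c z => ?_⟩
  have hγst : γ (st z) = i (q (γ (st z))) + st (α z) := by
    conv_lhs => rw [← hsplit (γ (st z)), hγpr, hsec]
  rw [hγ.map_add_s14, hγi, hγst, hi.map_add_s14, add_assoc]

theorem exists_bijective_split_form (hi : IsLin k i) (hst : IsLin k st) (hpr : IsLin k pr)
    (hexact : ∀ e, pr e = 0 ↔ ∃ b, i b = e) (hsec : ∀ x, pr (st x) = x) (hq : IsLin k q)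
    (hq_split : ∀ c z, q (i c + st z) = c) (hsplit : ∀ e, i (q e) + st (pr e) = e)
    (hα : IsLin k α) (hαbij : Function.Bijective α) (hβ : IsLin k β)
    (hβbij : Function.Bijective β) (hφ : IsLin k φ) :
    ∃ γ : E → E, IsLin k γ ∧ Function.Bijective γ ∧ (∀ a, γ (i a) = i (β a)) ∧
      (∀ e, pr (γ e) = α (pr e)) ∧ ∀ c z, γ (i c + st z) = i (β c + φ z) + st (α z) := by
  set γ : E → E := fun e => i (β (q e) + φ (pr e)) + st (α (pr e)) with hγ_def
  have hpr_split := pr_add_section hpr hexact hsec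
  have hγ_split : ∀ c z, γ (i c + st z) = i (β c + φ z) + st (α z) := fun c z => by
    simp only [hγ_def, hq_split, hpr_split]
  have hprγ : ∀ e, pr (γ e) = α (pr e) := fun e => hpr_split _ _
  refine ⟨γ, fun c u v => ?_, ⟨fun u v huv => ?_, fun e => ?_⟩, fun a => ?_, hprγ, hγ_split⟩
  · simp only [hγ_def, hpr c u v, hq c u v, hβ c (q u) (q v), hφ c (pr u) (pr v),
      hα c (pr u) (pr v), hst c (α (pr u)) (α (pr v)), hi.map_add_s14, hi.map_smul]
    module
  · rw [← hsplit u, ← hsplit v, hγ_split, hγ_split] at huv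
    have hz : pr u = pr v := hαbij.1 (by simpa only [hpr_split] using congrArg pr huv)
    have hc : q u = q v :=
      hβbij.1 (by simpa only [hq_split, hz, add_left_inj] using congrArg q huv)
    rw [← hsplit u, ← hsplit v, hz, hc]
  · obtain ⟨z, hz⟩ := hαbij.2 (pr e)
    obtain ⟨c, hc⟩ := hβbij.2 (q e - φ z)
    refine ⟨i c + st z, ?_⟩
    rw [hγ_split, hc, hz, sub_add_cancel, hsplit]
  · simpa only [hst.map_zero, hφ.map_zero, hα.map_zero, add_zero] using hγ_split a 0

end SplitExtension

section SplitProduct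

variable {k A B E : Type*} [Field k] [AddCommGroup B] [Module k B]
  [AddCommGroup E] [Module k E] {i : B → E} {st : A → E}
  {α : A → A} {β : B → B} {γ : E → E} {φ : A → B}
  {mA : A → A → A} {mB : B → B → B} {mE : E → E → E} {l r : A → B → B} {w : A → A → B}

theorem mul_split (hi : IsLin k i) (hmE : IsBilin k mE)
    (hmi : ∀ a b, i (mB a b) = mE (i a) (i b)) (hl : ∀ x a, i (l x a) = mE (st x) (i a))
    (hr : ∀ x a, i (r x a) = mE (i a) (st x))
    (hw : ∀ x y, i (w x y) = mE (st x) (st y) - st (mA x y)) (a : B) (x : A) (b : B) (y : A) :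
    mE (i a + st x) (i b + st y) = i (mB a b + r y a + l x b + w x y) + st (mA x y) := by
  simp only [hi.map_add_s14, hmi, hl, hr, hw, hmE.map_add_left, hmE.map_add_right]
  abel

theorem map_mul_split_iff (hi : IsLin k i) (hiinj : Function.Injective i) (hmE : IsBilin k mE)
    (hmi : ∀ a b, i (mB a b) = mE (i a) (i b)) (hl : ∀ x a, i (l x a) = mE (st x) (i a))
    (hr : ∀ x a, i (r x a) = mE (i a) (st x))
    (hw : ∀ x y, i (w x y) = mE (st x) (st y) - st (mA x y))
    (hαm : ∀ x y, α (mA x y) = mA (α x) (α y)) (hmB : IsBilin k mB) (hβ : IsLin k β)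
    (hβm : ∀ a b, β (mB a b) = mB (β a) (β b))
    (hγ_split : ∀ c z, γ (i c + st z) = i (β c + φ z) + st (α z)) :
    (∀ a x b y, γ (mE (i a + st x) (i b + st y)) = mE (γ (i a + st x)) (γ (i b + st y))) ↔
      (∀ x a, β (l x a) - l (α x) (β a) = mB (φ x) (β a)) ∧
      (∀ x a, β (r x a) - r (α x) (β a) = mB (β a) (φ x)) ∧
      (∀ x y, β (w x y) - w (α x) (α y)
        = mB (φ x) (φ y) - φ (mA x y) + l (α x) (φ y) + r (α y) (φ x)) := by
  have hl_lin : ∀ x, IsLin k (l x) := fun x =>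
    IsLin.of_injective_comp hi hiinj (by simpa only [hl] using (hmE.1 (st x)).comp hi)
  have hr_lin : ∀ x, IsLin k (r x) := fun x =>
    IsLin.of_injective_comp hi hiinj (by simpa only [hr] using (hmE.2 (st x)).comp hi)
  rw [← cocycle_conditions_iff hmB hl_lin hr_lin hβ hβm]
  simp only [mul_split hi hmE hmi hl hr hw, hγ_split, hαm, add_left_inj, hiinj.eq_iff]

end SplitProduct

theorem stmt14_general {k A B E : Type*} [Field k] [AddCommGroup A] [Module k A]
    [AddCommGroup B] [Module k B] [AddCommGroup E] [Module k E]
    (sA pA : A → A → A) (sB pB : B → B → B) (sE pE : E → E → E)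
    (hB : IsADAlg k sB pB) (hE : IsADAlg k sE pE)
    (i : B → E) (hi : IsLin k i) (hiinj : Function.Injective i)
    (his : ∀ a b, i (sB a b) = sE (i a) (i b))
    (hip : ∀ a b, i (pB a b) = pE (i a) (i b))
    (pr : E → A) (hpr : IsLin k pr)
    (hexact : ∀ e, pr e = 0 ↔ ∃ b, i b = e)
    (st : A → E) (hst : IsLin k st) (hsec : ∀ x, pr (st x) = x)
    -- the induced non-abelian 2-cocycle (valued in B via i)
    (ls rs lp rp : A → B → B) (w1 w2 : A → A → B)
    (hls : ∀ x a, i (ls x a) = sE (st x) (i a))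
    (hrs : ∀ x a, i (rs x a) = sE (i a) (st x))
    (hlp : ∀ x a, i (lp x a) = pE (st x) (i a))
    (hrp : ∀ x a, i (rp x a) = pE (i a) (st x))
    (hw1 : ∀ x y, i (w1 x y) = sE (st x) (st y) - st (sA x y))
    (hw2 : ∀ x y, i (w2 x y) = pE (st x) (st y) - st (pA x y))
    -- the pair of automorphisms (α, β)
    (α : A → A) (hα : IsLin k α) (hαbij : Function.Bijective α)
    (hαs : ∀ x y, α (sA x y) = sA (α x) (α y))
    (hαp : ∀ x y, α (pA x y) = pA (α x) (α y))
    (β : B → B) (hβ : IsLin k β) (hβbij : Function.Bijective β)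
    (hβs : ∀ a b, β (sB a b) = sB (β a) (β b))
    (hβp : ∀ a b, β (pB a b) = pB (β a) (β b)) :
    (∃ γ : E → E, IsLin k γ ∧ Function.Bijective γ ∧
        (∀ u v, γ (sE u v) = sE (γ u) (γ v)) ∧
        (∀ u v, γ (pE u v) = pE (γ u) (γ v)) ∧
        (∀ a : B, γ (i a) = i (β a)) ∧
        (∀ e : E, pr (γ e) = α (pr e)))
    ↔
    (∃ φ : A → B, IsLin k φ ∧
        (∀ x a, β (ls x a) - ls (α x) (β a) = sB (φ x) (β a)) ∧
        (∀ x a, β (rs x a) - rs (α x) (β a) = sB (β a) (φ x)) ∧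
        (∀ x a, β (lp x a) - lp (α x) (β a) = pB (φ x) (β a)) ∧
        (∀ x a, β (rp x a) - rp (α x) (β a) = pB (β a) (φ x)) ∧
        (∀ x y, β (w1 x y) - w1 (α x) (α y)
          = sB (φ x) (φ y) - φ (sA x y) + ls (α x) (φ y) + rs (α y) (φ x)) ∧
        (∀ x y, β (w2 x y) - w2 (α x) (α y)
          = pB (φ x) (φ y) - φ (pA x y) + lp (α x) (φ y) + rp (α y) (φ x))) := by
  obtain ⟨q, hq, hq_split, hsplit⟩ := exists_retraction hi hiinj hpr hst hsec hexact
  have forall_split : ∀ P : E → E → Prop,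
      (∀ a x b y, P (i a + st x) (i b + st y)) → ∀ u v, P u v := fun P h u v => by
    simpa only [hsplit] using h (q u) (pr u) (q v) (pr v)
  constructor
  · rintro ⟨γ, hγ, -, hγs, hγp, hγi, hγpr⟩
    obtain ⟨φ, hφ, hγ_split⟩ := exists_split_form_of_compat hi hst hsec hq hsplit hγ hγi hγpr
    obtain ⟨hls', hrs', hw1'⟩ := (map_mul_split_iff hi hiinj hE.1 his hls hrs hw1 hαs hB.1 hβ hβs
      hγ_split).1 fun _ _ _ _ => hγs _ _
    obtain ⟨hlp', hrp', hw2'⟩ := (map_mul_split_iff hi hiinj hE.2.1 hip hlp hrp hw2 hαp hB.2.1 hβ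
      hβp hγ_split).1 fun _ _ _ _ => hγp _ _
    exact ⟨φ, hφ, hls', hrs', hlp', hrp', hw1', hw2'⟩
  · rintro ⟨φ, hφ, hls', hrs', hlp', hrp', hw1', hw2'⟩
    obtain ⟨γ, hγ, hγbij, hγi, hγpr, hγ_split⟩ := exists_bijective_split_form hi hst hpr hexact
      hsec hq hq_split hsplit hα hαbij hβ hβbij hφ
    refine ⟨γ, hγ, hγbij, forall_split _ ?_, forall_split _ ?_, hγi, hγpr⟩
    · exact (map_mul_split_iff hi hiinj hE.1 his hls hrs hw1 hαs hB.1 hβ hβs hγ_split).2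
        ⟨hls', hrs', hw1'⟩
    · exact (map_mul_split_iff hi hiinj hE.2.1 hip hlp hrp hw2 hαp hB.2.1 hβ hβp hγ_split).2
        ⟨hlp', hrp', hw2'⟩

theorem stmt14 {k A B E : Type*} [Field k] [AddCommGroup A] [Module k A]
    [AddCommGroup B] [Module k B] [AddCommGroup E] [Module k E]
    (sA pA : A → A → A) (sB pB : B → B → B) (sE pE : E → E → E)
    (hA : IsADAlg k sA pA) (hB : IsADAlg k sB pB) (hE : IsADAlg k sE pE)
    (i : B → E) (hi : IsLin k i) (hiinj : Function.Injective i)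
    (his : ∀ a b, i (sB a b) = sE (i a) (i b))
    (hip : ∀ a b, i (pB a b) = pE (i a) (i b))
    (pr : E → A) (hpr : IsLin k pr) (hprsur : Function.Surjective pr)
    (hprs : ∀ u v, pr (sE u v) = sA (pr u) (pr v))
    (hprp : ∀ u v, pr (pE u v) = pA (pr u) (pr v))
    (hexact : ∀ e, pr e = 0 ↔ ∃ b, i b = e)
    (st : A → E) (hst : IsLin k st) (hsec : ∀ x, pr (st x) = x)
    -- the induced non-abelian 2-cocycle (valued in B via i)
    (ls rs lp rp : A → B → B) (w1 w2 : A → A → B)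
    (hls : ∀ x a, i (ls x a) = sE (st x) (i a))
    (hrs : ∀ x a, i (rs x a) = sE (i a) (st x))
    (hlp : ∀ x a, i (lp x a) = pE (st x) (i a))
    (hrp : ∀ x a, i (rp x a) = pE (i a) (st x))
    (hw1 : ∀ x y, i (w1 x y) = sE (st x) (st y) - st (sA x y))
    (hw2 : ∀ x y, i (w2 x y) = pE (st x) (st y) - st (pA x y))
    -- the pair of automorphisms (α, β)
    (α : A → A) (hα : IsLin k α) (hαbij : Function.Bijective α)
    (hαs : ∀ x y, α (sA x y) = sA (α x) (α y))
    (hαp : ∀ x y, α (pA x y) = pA (α x) (α y))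
    (β : B → B) (hβ : IsLin k β) (hβbij : Function.Bijective β)
    (hβs : ∀ a b, β (sB a b) = sB (β a) (β b))
    (hβp : ∀ a b, β (pB a b) = pB (β a) (β b)) :
    (∃ γ : E → E, IsLin k γ ∧ Function.Bijective γ ∧
        (∀ u v, γ (sE u v) = sE (γ u) (γ v)) ∧
        (∀ u v, γ (pE u v) = pE (γ u) (γ v)) ∧
        (∀ a : B, γ (i a) = i (β a)) ∧
        (∀ e : E, pr (γ e) = α (pr e)))
    ↔
    (∃ φ : A → B, IsLin k φ ∧
        (∀ x a, β (ls x a) - ls (α x) (β a) = sB (φ x) (β a)) ∧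
        (∀ x a, β (rs x a) - rs (α x) (β a) = sB (β a) (φ x)) ∧
        (∀ x a, β (lp x a) - lp (α x) (β a) = pB (φ x) (β a)) ∧
        (∀ x a, β (rp x a) - rp (α x) (β a) = pB (β a) (φ x)) ∧
        (∀ x y, β (w1 x y) - w1 (α x) (α y)
          = sB (φ x) (φ y) - φ (sA x y) + ls (α x) (φ y) + rs (α y) (φ x)) ∧
        (∀ x y, β (w2 x y) - w2 (α x) (α y)
          = pB (φ x) (φ y) - φ (pA x y) + lp (α x) (φ y) + rp (α y) (φ x))) :=
  stmt14_general sA pA sB pB sE pE hB hE i hi hiinj his hip pr hpr hexact st hst hsec ls rs lp rp w1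
    w2 hls hrs hlp hrp hw1 hw2 α hα hαbij hαs hαp β hβ hβbij hβs hβp
end
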